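/- For geometric weights wₘ(ρ) = ρ^m / ∑_{j=1}^M ρ^j with ρ > 1, the squared ℓ₂ norm satisfies ‖w(ρ)‖₂² = (∑_{m=1}^M ρ^{2m}) / (∑_{j=1}^M ρ^j)², and this quantity is a monotonically increasing function of ρ on (1, ∞) for each fixed M ≥ 2. -/
import Mathlib

open Finset

private lemma sum_reflect_R (a b : ℝ) (M : ℕ) :
    ∑ k ∈ range M, a ^ (M - 1 - k) * b ^ k = ∑ k ∈ range M, a ^ k * b ^ (M - 1 - k) := by
  rw [← Finset.sum_range_reflect (fun k => a ^ k * b ^ (M - 1 - k)) M]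
  apply Finset.sum_congr rfl
  intro k hk
  rw [Finset.mem_range] at hk
  rw [Nat.sub_sub_self (by omega : k ≤ M - 1)]

private lemma key_sum_lt (a b : ℝ) (M : ℕ) (hM : 2 ≤ M) (ha : 1 < a) (hab : a < b) :
    ∑ k ∈ range M, a ^ k * b ^ (M - 1 - k) < ∑ k ∈ range M, a ^ k * b ^ k := by
  have hb : 1 < b := ha.trans hab
  have h1 : ∑ k ∈ range M, a ^ (M - 1 - k) * b ^ (M - 1 - k)
      = ∑ k ∈ range M, a ^ k * b ^ k :=
    Finset.sum_range_reflect (fun k => a ^ k * b ^ k) M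
  have h2 : ∑ k ∈ range M, a ^ (M - 1 - k) * b ^ k
      = ∑ k ∈ range M, a ^ k * b ^ (M - 1 - k) := sum_reflect_R a b M
  have hT : ∑ k ∈ range M, (a ^ k - a ^ (M - 1 - k)) * (b ^ k - b ^ (M - 1 - k))
      = 2 * (∑ k ∈ range M, a ^ k * b ^ k) - 2 * (∑ k ∈ range M, a ^ k * b ^ (M - 1 - k)) := by
    calc ∑ k ∈ range M, (a ^ k - a ^ (M - 1 - k)) * (b ^ k - b ^ (M - 1 - k))
        = ∑ k ∈ range M, ((a ^ k * b ^ k + a ^ (M - 1 - k) * b ^ (M - 1 - k))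
            - (a ^ k * b ^ (M - 1 - k) + a ^ (M - 1 - k) * b ^ k)) := by
          apply Finset.sum_congr rfl; intro k _; ring
      _ = _ := by
          rw [Finset.sum_sub_distrib, Finset.sum_add_distrib, Finset.sum_add_distrib, h1, h2]
          ring
  have hpos : 0 < ∑ k ∈ range M, (a ^ k - a ^ (M - 1 - k)) * (b ^ k - b ^ (M - 1 - k)) := by
    apply Finset.sum_pos'
    · intro k _
      rcases le_total k (M - 1 - k) with h | h
      · have g1 : a ^ k ≤ a ^ (M - 1 - k) := pow_le_pow_right₀ ha.le h
        have g2 : b ^ k ≤ b ^ (M - 1 - k) := pow_le_pow_right₀ hb.le h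
        nlinarith
      · have g1 : a ^ (M - 1 - k) ≤ a ^ k := pow_le_pow_right₀ ha.le h
        have g2 : b ^ (M - 1 - k) ≤ b ^ k := pow_le_pow_right₀ hb.le h
        nlinarith
    · refine ⟨M - 1, Finset.mem_range.2 (by omega), ?_⟩
      rw [Nat.sub_self, pow_zero, pow_zero]
      have g1 : 1 < a ^ (M - 1) := one_lt_pow₀ ha (by omega)
      have g2 : 1 < b ^ (M - 1) := one_lt_pow₀ hb (by omega)
      nlinarith
  linarith

private lemma closed_form (M : ℕ) (hM : 2 ≤ M) {ρ : ℝ} (hρ : 1 < ρ) :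
    (∑ m : Fin M, ρ ^ (2 * ((m : ℕ) + 1))) / (∑ j : Fin M, ρ ^ ((j : ℕ) + 1)) ^ 2
      = (ρ - 1) * (ρ ^ M + 1) / ((ρ + 1) * (ρ ^ M - 1)) := by
  have h0 : (0:ℝ) < ρ := by linarith
  have hne1 : ρ ≠ 1 := by linarith
  have hsq : ρ ^ 2 ≠ 1 := by nlinarith
  have hpM : 1 < ρ ^ M := one_lt_pow₀ hρ (by omega)
  have d1 : ρ - 1 ≠ 0 := by intro h; apply hne1; linarith
  have d2 : ρ + 1 ≠ 0 := by positivity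
  have d3 : ρ ^ 2 - 1 ≠ 0 := sub_ne_zero.2 hsq
  have d4 : ρ ≠ 0 := ne_of_gt h0
  have d5 : ρ ^ M - 1 ≠ 0 := by intro h; nlinarith
  rw [Fin.sum_univ_eq_sum_range (fun m => ρ ^ (2 * (m + 1))) M,
      Fin.sum_univ_eq_sum_range (fun j => ρ ^ (j + 1)) M]
  have hnum : ∑ m ∈ range M, ρ ^ (2 * (m + 1)) = (∑ m ∈ range M, (ρ ^ 2) ^ m) * ρ ^ 2 := by
    rw [Finset.sum_mul]
    apply Finset.sum_congr rfl
    intro m _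
    rw [← pow_mul]
    ring
  have hden : ∑ j ∈ range M, ρ ^ (j + 1) = (∑ j ∈ range M, ρ ^ j) * ρ := by
    rw [Finset.sum_mul]
    apply Finset.sum_congr rfl
    intro j _
    rw [pow_succ]
  rw [hnum, hden, geom_sum_eq hsq, geom_sum_eq hne1]
  have h1 : (ρ ^ 2) ^ M = (ρ ^ M) ^ 2 := by ring
  rw [h1]
  field_simp
  ring

/-- For geometric weights `wₘ(ρ) = ρ^m / ∑_{j=1}^M ρ^j` with `ρ > 1`,
`‖w(ρ)‖₂² = (∑ ρ^{2m}) / (∑ ρ^j)²`, and this quantity is increasing in `ρ`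
on `(1, ∞)` for fixed `M ≥ 2`. -/
theorem geometric_weights_sq_norm_monotone (M : ℕ) (hM : 2 ≤ M) :
    (∀ ρ : ℝ, 1 < ρ →
      ∑ m : Fin M, (ρ ^ ((m : ℕ) + 1) / ∑ j : Fin M, ρ ^ ((j : ℕ) + 1)) ^ 2
        = (∑ m : Fin M, ρ ^ (2 * ((m : ℕ) + 1))) / (∑ j : Fin M, ρ ^ ((j : ℕ) + 1)) ^ 2) ∧
    StrictMonoOn
      (fun ρ : ℝ =>
        (∑ m : Fin M, ρ ^ (2 * ((m : ℕ) + 1))) / (∑ j : Fin M, ρ ^ ((j : ℕ) + 1)) ^ 2)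
      (Set.Ioi (1 : ℝ)) := by
  constructor
  · intro ρ hρ
    rw [Finset.sum_div]
    apply Finset.sum_congr rfl
    intro m _
    rw [div_pow]
    congr 1
    rw [← pow_mul, Nat.mul_comm]
  · intro a ha b hb hab
    simp only [Set.mem_Ioi] at ha hb
    have hb1 : 1 < b := ha.trans hab
    simp only
    rw [closed_form M hM ha, closed_form M hM hb1]
    have key := key_sum_lt a b M hM ha hab
    have hL : (a * b) ^ M - 1 = (∑ k ∈ range M, a ^ k * b ^ k) * (a * b - 1) := by
      rw [← geom_sum_mul (a * b) M]
      congr 1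
      apply Finset.sum_congr rfl
      intro k _
      rw [mul_pow]
    have hsum : ∑ k ∈ range M, a ^ k * b ^ (M - 1 - k)
        = ∑ k ∈ range M, b ^ k * a ^ (M - 1 - k) := by
      rw [← sum_reflect_R b a M]
      apply Finset.sum_congr rfl
      intro k _
      ring
    have hR : b ^ M - a ^ M = (∑ k ∈ range M, a ^ k * b ^ (M - 1 - k)) * (b - a) := by
      rw [hsum, geom_sum₂_mul b a M]
    have K1 : (b ^ M - a ^ M) * (a * b - 1) < ((a * b) ^ M - 1) * (b - a) := by
      rw [hR, hL]
      have hc : (0:ℝ) < (b - a) * (a * b - 1) := mul_pos (by linarith) (by nlinarith)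
      nlinarith [mul_lt_mul_of_pos_right key hc]
    have hda : (0:ℝ) < (a + 1) * (a ^ M - 1) :=
      mul_pos (by linarith) (by have := one_lt_pow₀ ha (by omega : M ≠ 0); linarith)
    have hdb : (0:ℝ) < (b + 1) * (b ^ M - 1) :=
      mul_pos (by linarith) (by have := one_lt_pow₀ hb1 (by omega : M ≠ 0); linarith)
    rw [div_lt_div_iff₀ hda hdb]
    have hid : (b - 1) * (b ^ M + 1) * ((a + 1) * (a ^ M - 1))
        - (a - 1) * (a ^ M + 1) * ((b + 1) * (b ^ M - 1))
        = 2 * (((a * b) ^ M - 1) * (b - a) - (b ^ M - a ^ M) * (a * b - 1)) := by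
      ring
    linarith
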